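/- (Completeness of proof traces for provability in Horn PCL) For a Horn PCL theory Δ and atom a: Δ ⊢ a in PCL natural deduction if and only if a occurs in some proof trace of Δ, i.e., a ∈ ⋃{atoms(σ) : σ ∈ ⟦Δ⟧}. -/

import Mathlib

/-!
Soundness of traces: every atom of a trace is provable, by induction on the trace. For a
contractual clause `α ↠ a`, the atoms of `α` are provable from `Δ` together with the fact `a`,
which is precisely the minor premise of (↠E).

Completeness: natural deduction is sound for the Kripke model whose worlds are Horn theories
ordered by inclusion, with an atom true at `w` when it occurs in some trace of `w`. Every clause
of `Δ` holds at `Δ`, because finitely many traces can be concatenated (dropping repetitions)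
into a single trace, which then contains all premises of the clause.
-/

/-- Formulae of Propositional Contract Logic over atoms `A`. -/
inductive PCLForm (A : Type) : Type
  | atom : A → PCLForm A
  | top  : PCLForm A
  | and  : PCLForm A → PCLForm A → PCLForm A
  | imp  : PCLForm A → PCLForm A → PCLForm A
  | cimp : PCLForm A → PCLForm A → PCLForm A

/-- Natural deduction for PCL: intuitionistic rules plus (↠I1), (↠I2), (↠E). -/
inductive PCLProves {A : Type} : Set (PCLForm A) → PCLForm A → Prop
  | ax {Δ p} : p ∈ Δ → PCLProves Δ p
  | topI {Δ} : PCLProves Δ .top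
  | andI {Δ p q} : PCLProves Δ p → PCLProves Δ q → PCLProves Δ (.and p q)
  | andE1 {Δ p q} : PCLProves Δ (.and p q) → PCLProves Δ p
  | andE2 {Δ p q} : PCLProves Δ (.and p q) → PCLProves Δ q
  | impI {Δ p q} : PCLProves (insert p Δ) q → PCLProves Δ (.imp p q)
  | impE {Δ p q} : PCLProves Δ (.imp p q) → PCLProves Δ p → PCLProves Δ q
  | cimpI1 {Δ p q} : PCLProves Δ q → PCLProves Δ (.cimp p q)
  | cimpI2 {Δ p q p' q'} : PCLProves Δ (.cimp p' q') → PCLProves (insert p Δ) p' →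
      PCLProves (insert q' Δ) (.cimp p q) → PCLProves Δ (.cimp p q)
  | cimpE {Δ p q} : PCLProves Δ (.cimp p q) → PCLProves (insert q Δ) p → PCLProves Δ q

/-- A Horn PCL clause: a set of premise atoms, a flag telling whether the
implication is contractual (↠, `ctr = true`) or intuitionistic (→, `ctr = false`),
and a head atom. An atomic fact `a` is the clause `⊤ → a`, i.e. `⟨∅, false, a⟩`. -/
structure HornClause (A : Type) where
  prem : Finset A
  ctr : Bool
  head : A
deriving DecidableEq

/-- Remove duplicates from the right (keep the leftmost occurrence). -/
def rdedup {A : Type} [DecidableEq A] : List A → List A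
  | [] => []
  | x :: l => x :: (rdedup l).filter (· ≠ x)

/-- Proof traces of a Horn PCL theory (Def. of ⟦Δ⟧):
(ε) the empty trace; (→) append the head of an intuitionistic clause whose
premises all occur in the trace; (↠) insert, at any position, the head `a` of a
contractual clause into a trace of `Δ, a` in which all the premises occur
(duplicates removed from the right). -/
inductive Trace {A : Type} [DecidableEq A] : Set (HornClause A) → List A → Prop
  | nil {Δ} : Trace Δ []
  | imp {Δ : Set (HornClause A)} {X : Finset A} {a : A} {σ : List A} :
      (⟨X, false, a⟩ : HornClause A) ∈ Δ → Trace Δ σ → (∀ x ∈ X, x ∈ σ) →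
      Trace Δ (rdedup (σ ++ [a]))
  | cimp {Δ : Set (HornClause A)} {X : Finset A} {a : A} {σ u v : List A} :
      (⟨X, true, a⟩ : HornClause A) ∈ Δ →
      Trace (insert (⟨∅, false, a⟩ : HornClause A) Δ) σ → (∀ x ∈ X, x ∈ σ) →
      σ = u ++ v → Trace Δ (rdedup (u ++ a :: v))

/-- The conjunction of a finite set of atoms (⊤ when empty). -/
noncomputable def conjOf {A : Type} (X : Finset A) : PCLForm A :=
  X.toList.foldr (fun x f => .and (.atom x) f) .top

/-- The PCL formula corresponding to a Horn clause. -/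
noncomputable def HornClause.toForm {A : Type} (c : HornClause A) : PCLForm A :=
  if c.ctr then .cimp (conjOf c.prem) (.atom c.head)
  else .imp (conjOf c.prem) (.atom c.head)

section Rdedup
variable {A : Type} [DecidableEq A]

@[simp] lemma mem_rdedup {l : List A} {x : A} : x ∈ rdedup l ↔ x ∈ l := by
  induction l with
  | nil => rfl
  | cons y l ih => by_cases h : x = y <;> simp [rdedup, h, ih]

lemma nodup_rdedup (l : List A) : (rdedup l).Nodup := by
  induction l with
  | nil => exact List.nodup_nil
  | cons y l ih => exact List.nodup_cons.2 ⟨by simp, ih.filter _⟩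

lemma rdedup_eq_self_of_nodup {l : List A} (h : l.Nodup) : rdedup l = l := by
  induction l with
  | nil => rfl
  | cons y l ih =>
    obtain ⟨hy, hl⟩ := List.nodup_cons.1 h
    simp only [rdedup, ih hl, List.cons.injEq, true_and, List.filter_eq_self]
    intro x hx
    simpa using ne_of_mem_of_not_mem hx hy

lemma rdedup_append (l m : List A) :
    rdedup (l ++ m) = rdedup l ++ (rdedup m).filter (· ∉ l) := by
  induction l with
  | nil => simp [rdedup]
  | cons x l ih =>
    simp only [List.cons_append, rdedup, ih, List.filter_append, List.filter_filter]
    congr 2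
    apply List.filter_congr
    intro y _
    by_cases h : y = x <;> simp [h]

lemma rdedup_rdedup_append (l m : List A) : rdedup (rdedup l ++ m) = rdedup (l ++ m) := by
  simp only [rdedup_append, rdedup_eq_self_of_nodup (nodup_rdedup l), mem_rdedup]

lemma rdedup_append_rdedup (l m : List A) : rdedup (l ++ rdedup m) = rdedup (l ++ m) := by
  rw [rdedup_append, rdedup_append, rdedup_eq_self_of_nodup (nodup_rdedup m)]

lemma rdedup_filter (l : List A) (p : A → Bool) : rdedup (l.filter p) = (rdedup l).filter p := by
  induction l with
  | nil => rfl
  | cons y l ih =>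
    by_cases hy : p y
    · simp only [List.filter_cons_of_pos hy, rdedup, ih, List.filter_filter, Bool.and_comm]
    · simp only [List.filter_cons_of_neg hy, rdedup, ih, List.filter_filter]
      apply List.filter_congr
      intro x _
      by_cases h : x = y <;> simp_all

lemma rdedup_append_filter {l m : List A} {p : A → Bool}
    (h : ∀ x ∈ m, p x = false → x ∈ l) :
    rdedup (l ++ m.filter p) = rdedup (l ++ m) := by
  rw [rdedup_append, rdedup_append, rdedup_filter, List.filter_filter]
  congr 1
  apply List.filter_congr
  intro x hx
  by_cases hp : p x <;> simp_all

end Rdedup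

namespace Trace
variable {A : Type} [DecidableEq A] {Δ Δ' : Set (HornClause A)} {σ τ : List A}

lemma nodup (h : Trace Δ σ) : σ.Nodup := by
  cases h with
  | nil => exact List.nodup_nil
  | imp _ _ _ => exact nodup_rdedup _
  | cimp _ _ _ _ => exact nodup_rdedup _

lemma mono (hΔ : Δ ⊆ Δ') (h : Trace Δ σ) : Trace Δ' σ := by
  induction h generalizing Δ' with
  | nil => exact nil
  | imp hc _ hX ih => exact imp (hΔ hc) (ih hΔ) hX
  | cimp hc _ hX he ih => exact cimp (hΔ hc) (ih (Set.insert_subset_insert hΔ)) hX he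

/-- Replaying the construction of `τ` on top of `σ`. -/
lemma append (hσ : Trace Δ σ) (hτ : Trace Δ τ) : Trace Δ (rdedup (σ ++ τ)) := by
  induction hτ generalizing σ with
  | nil => rwa [List.append_nil, rdedup_eq_self_of_nodup hσ.nodup]
  | @imp Δ X b τ hc _ hX ih =>
    have h := imp hc (ih hσ) fun x hx => mem_rdedup.2 (List.mem_append_right σ (hX x hx))
    rwa [rdedup_rdedup_append, List.append_assoc, ← rdedup_append_rdedup] at h
  | @cimp Δ X b τ u v hc _ hX he ih =>
    -- `b` is inserted into the merged trace where it sits between `σ ++ u` and the rest of `v`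
    have hsplit : rdedup (σ ++ τ) = rdedup (σ ++ u) ++ (rdedup v).filter (· ∉ σ ++ u) := by
      rw [he, ← List.append_assoc, rdedup_append]
    have h := cimp hc (ih (hσ.mono (Set.subset_insert _ _)))
      (fun x hx => mem_rdedup.2 (List.mem_append_right σ (hX x hx))) hsplit
    have hfilter : ∀ x ∈ rdedup v, decide (x ∉ σ ++ u) = false → x ∈ σ ++ u ++ [b] := by
      intro x _ hx
      simp only [decide_eq_false_iff_not, not_not] at hx
      exact List.mem_append_left _ hx
    rwa [rdedup_rdedup_append, ← List.singleton_append, ← List.append_assoc,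
      rdedup_append_filter hfilter, rdedup_append_rdedup, List.append_assoc, List.append_assoc,
      List.singleton_append, ← rdedup_append_rdedup] at h

lemma exists_forall_mem {X : Finset A} (h : ∀ x ∈ X, ∃ σ, Trace Δ σ ∧ x ∈ σ) :
    ∃ σ, Trace Δ σ ∧ ∀ x ∈ X, x ∈ σ := by
  induction X using Finset.induction_on with
  | empty => exact ⟨[], nil, by simp⟩
  | insert y X _ ih =>
    obtain ⟨σ, hσ, hXσ⟩ := ih fun x hx => h x (Finset.mem_insert_of_mem hx)
    obtain ⟨τ, hτ, hyτ⟩ := h y (Finset.mem_insert_self _ _)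
    refine ⟨_, hσ.append hτ, fun x hx => ?_⟩
    rcases Finset.mem_insert.1 hx with rfl | hx
    · simp [hyτ]
    · simp [hXσ x hx]

end Trace

namespace PCLProves
variable {A : Type} {Γ Γ' : Set (PCLForm A)} {p q : PCLForm A}

lemma weaken (h : PCLProves Γ p) (hs : Γ ⊆ Γ') : PCLProves Γ' p := by
  induction h generalizing Γ' with
  | ax hp => exact ax (hs hp)
  | topI => exact topI
  | andI _ _ ih₁ ih₂ => exact andI (ih₁ hs) (ih₂ hs)
  | andE1 _ ih => exact andE1 (ih hs)
  | andE2 _ ih => exact andE2 (ih hs)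
  | impI _ ih => exact impI (ih (Set.insert_subset_insert hs))
  | impE _ _ ih₁ ih₂ => exact impE (ih₁ hs) (ih₂ hs)
  | cimpI1 _ ih => exact cimpI1 (ih hs)
  | cimpI2 _ _ _ ih₁ ih₂ ih₃ =>
    exact cimpI2 (ih₁ hs) (ih₂ (Set.insert_subset_insert hs))
      (ih₃ (Set.insert_subset_insert hs))
  | cimpE _ _ ih₁ ih₂ => exact cimpE (ih₁ hs) (ih₂ (Set.insert_subset_insert hs))

lemma forall_insert (hs : ∀ r ∈ Γ, PCLProves Γ' r) :
    ∀ r ∈ insert p Γ, PCLProves (insert p Γ') r := by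
  rintro r (rfl | hr)
  · exact ax (Set.mem_insert _ _)
  · exact (hs r hr).weaken (Set.subset_insert _ _)

lemma cut (h : PCLProves Γ p) (hs : ∀ r ∈ Γ, PCLProves Γ' r) : PCLProves Γ' p := by
  induction h generalizing Γ' with
  | ax hp => exact hs _ hp
  | topI => exact topI
  | andI _ _ ih₁ ih₂ => exact andI (ih₁ hs) (ih₂ hs)
  | andE1 _ ih => exact andE1 (ih hs)
  | andE2 _ ih => exact andE2 (ih hs)
  | impI _ ih => exact impI (ih (forall_insert hs))
  | impE _ _ ih₁ ih₂ => exact impE (ih₁ hs) (ih₂ hs)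
  | cimpI1 _ ih => exact cimpI1 (ih hs)
  | cimpI2 _ _ _ ih₁ ih₂ ih₃ =>
    exact cimpI2 (ih₁ hs) (ih₂ (forall_insert hs)) (ih₃ (forall_insert hs))
  | cimpE _ _ ih₁ ih₂ => exact cimpE (ih₁ hs) (ih₂ (forall_insert hs))

lemma cut_fact (h : PCLProves (insert (.imp .top q) Γ) p) (hq : PCLProves Γ q) :
    PCLProves Γ p := by
  refine h.cut ?_
  rintro r (rfl | hr)
  · exact impI (hq.weaken (Set.subset_insert _ _))
  · exact ax hr

lemma conjOf_intro {X : Finset A} (h : ∀ x ∈ X, PCLProves Γ (.atom x)) :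
    PCLProves Γ (conjOf X) := by
  simp_rw [← Finset.mem_toList] at h
  rw [conjOf]
  generalize X.toList = l at h
  induction l with
  | nil => exact topI
  | cons y l ih =>
    exact andI (h y List.mem_cons_self) (ih fun x hx => h x (List.mem_cons_of_mem y hx))

end PCLProves

section Soundness
variable {A : Type}

@[simp] lemma conjOf_empty : conjOf (∅ : Finset A) = .top := by simp [conjOf]

@[simp] lemma HornClause.toForm_imp (X : Finset A) (a : A) :
    HornClause.toForm ⟨X, false, a⟩ = .imp (conjOf X) (.atom a) := rfl

variable [DecidableEq A]

lemma Trace.proves_of_mem {Δ : Set (HornClause A)} {σ : List A} (h : Trace Δ σ) {a : A}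
    (ha : a ∈ σ) : PCLProves (HornClause.toForm '' Δ) (.atom a) := by
  induction h generalizing a with
  | nil => simp at ha
  | @imp Δ X b σ hc _ hX ih =>
    obtain ha | rfl : a ∈ σ ∨ a = b := by simpa using ha
    · exact ih ha
    · exact .impE (.ax ⟨_, hc, rfl⟩) (.conjOf_intro fun x hx => ih (hX x hx))
  | @cimp Δ X b σ u v hc _ hX he ih =>
    have ih' {x : A} (hx : x ∈ σ) :
        PCLProves (insert (.imp .top (.atom b)) (HornClause.toForm '' Δ)) (.atom x) := by
      simpa [Set.image_insert_eq] using ih hx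
    have hb : PCLProves (HornClause.toForm '' Δ) (.atom b) := by
      refine .cimpE (.ax ⟨_, hc, rfl⟩) (.conjOf_intro fun x hx => ?_)
      exact ((ih' (hX x hx)).weaken (Set.insert_subset_insert (Set.subset_insert _ _))).cut_fact
        (.ax (Set.mem_insert _ _))
    obtain ha | rfl : a ∈ σ ∨ a = b := by
      simp only [mem_rdedup, List.mem_append, List.mem_cons] at ha
      rw [he, List.mem_append]
      tauto
    · exact (ih' ha).cut_fact hb
    · exact hb

end Soundness

section Completeness
variable {A : Type} [DecidableEq A]

/-- Forcing in the canonical Kripke model: worlds are Horn theories ordered by inclusion, an atom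
holds where it occurs in a proof trace, and `p ↠ q` is read as `(q → p) → q`. -/
def Forces : Set (HornClause A) → PCLForm A → Prop
  | w, .atom a => ∃ σ, Trace w σ ∧ a ∈ σ
  | _, .top => True
  | w, .and p q => Forces w p ∧ Forces w q
  | w, .imp p q => ∀ w', w ⊆ w' → Forces w' p → Forces w' q
  | w, .cimp p q =>
    ∀ w', w ⊆ w' → (∀ w'', w' ⊆ w'' → Forces w'' q → Forces w'' p) → Forces w' q

lemma Forces.mono {p : PCLForm A} {w w' : Set (HornClause A)} (h : Forces w p) (hw : w ⊆ w') :
    Forces w' p := by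
  induction p generalizing w w' with
  | atom a => obtain ⟨σ, hσ, ha⟩ := h; exact ⟨σ, hσ.mono hw, ha⟩
  | top => trivial
  | and p q ihp ihq => exact ⟨ihp h.1 hw, ihq h.2 hw⟩
  | imp p q => exact fun w'' hw'' hp => h w'' (hw.trans hw'') hp
  | cimp p q => exact fun w'' hw'' H => h w'' (hw.trans hw'') H

lemma forces_insert {Γ : Set (PCLForm A)} {q : PCLForm A} {w w' : Set (HornClause A)}
    (hw : w ⊆ w') (hΓ : ∀ r ∈ Γ, Forces w r) (hq : Forces w' q) :
    ∀ r ∈ insert q Γ, Forces w' r :=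
  Set.forall_mem_insert.2 ⟨hq, fun r hr => (hΓ r hr).mono hw⟩

lemma PCLProves.forces {Γ : Set (PCLForm A)} {p : PCLForm A} (h : PCLProves Γ p)
    {w : Set (HornClause A)} (hw : ∀ r ∈ Γ, Forces w r) : Forces w p := by
  induction h generalizing w with
  | ax hp => exact hw _ hp
  | topI => trivial
  | andI _ _ ih₁ ih₂ => exact ⟨ih₁ hw, ih₂ hw⟩
  | andE1 _ ih => exact (ih hw).1
  | andE2 _ ih => exact (ih hw).2
  | impI _ ih => exact fun w' hww' hp => ih (forces_insert hww' hw hp)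
  | impE _ _ ih₁ ih₂ => exact ih₁ hw w subset_rfl (ih₂ hw)
  | cimpI1 _ ih => exact fun w' hww' _ => (ih hw).mono hww'
  | @cimpI2 Γ p q p' q' _ _ _ ih₁ ih₂ ih₃ =>
    intro w' hww' hqp
    have hpq {w''} (h : w' ⊆ w'') (hq' : Forces w'' q') : Forces w'' (.cimp p q) :=
      ih₃ (forces_insert (hww'.trans h) hw hq')
    refine hpq subset_rfl (ih₁ hw w' hww' fun w'' h hq' => ?_) w' subset_rfl hqp
    have hq : Forces w'' q :=
      hpq h hq' w'' subset_rfl fun w₃ h₃ hq₃ => hqp w₃ (h.trans h₃) hq₃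
    exact ih₂ (forces_insert (hww'.trans h) hw (hqp w'' h hq))
  | cimpE _ _ ih₁ ih₂ =>
    exact ih₁ hw w subset_rfl fun w' h hq => ih₂ (forces_insert h hw hq)

lemma forces_conjOf {X : Finset A} {w : Set (HornClause A)} :
    Forces w (conjOf X) ↔ ∀ x ∈ X, ∃ σ, Trace w σ ∧ x ∈ σ := by
  simp_rw [← Finset.mem_toList]
  rw [conjOf]
  induction X.toList with
  | nil => simp [Forces]
  | cons y l ih => simp [Forces, ih]

lemma forces_toForm_of_mem {Δ : Set (HornClause A)} {c : HornClause A} (hc : c ∈ Δ) :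
    Forces Δ c.toForm := by
  obtain ⟨X, _ | _, a⟩ := c
  · intro w hw hX
    obtain ⟨σ, hσ, hXσ⟩ := Trace.exists_forall_mem (forces_conjOf.1 hX)
    exact ⟨_, .imp (hw hc) hσ hXσ, by simp⟩
  · intro w hw hX
    set w' := insert (⟨∅, false, a⟩ : HornClause A) w
    have ha : Forces w' (.atom a) := ⟨_, .imp (Set.mem_insert _ _) .nil (by simp), by simp⟩
    obtain ⟨σ, hσ, hXσ⟩ :=
      Trace.exists_forall_mem (forces_conjOf.1 (hX w' (Set.subset_insert _ _) ha))
    exact ⟨_, .cimp (hw hc) hσ hXσ (List.append_nil σ).symm, by simp⟩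

end Completeness

/-- for a Horn PCL theory Δ and an atom a,
Δ ⊢ a in PCL natural deduction iff a occurs in some proof trace of Δ. -/
theorem provable_iff_in_trace {A : Type} [DecidableEq A]
    (Δ : Set (HornClause A)) (a : A) :
    PCLProves (HornClause.toForm '' Δ) (.atom a) ↔ ∃ σ, Trace Δ σ ∧ a ∈ σ := by
  refine ⟨fun h => h.forces ?_, fun ⟨σ, hσ, ha⟩ => hσ.proves_of_mem ha⟩
  rintro _ ⟨c, hc, rfl⟩
  exact forces_toForm_of_mem hc
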